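/- Let k be a commutative ring, A : SimplexCategory ⥤ AlgebraCat k a cosimplicial k-algebra, and n a natural number. Suppose that for every m < n, every i with 0 ≤ i ≤ m, and all elements a, b of the algebra A[m], the elements A(δ_i)(a) and A(δ_{i+1})(b) commute in A[m+1], where δ_i : [m] → [m+1] denotes the i-th coface map of the simplex category. Then the algebra A[m] is commutative for every m < n. -/

import Mathlib

open CategoryTheory Function

theorem Commute.of_map_of_leftInverse {M N F : Type*} [Mul M] [Mul N] [FunLike F N M]
    [MulHomClass F N M] (s : F) {f g : M → N} (hf : LeftInverse s f) (hg : LeftInverse s g)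
    {a b : M} (h : Commute (f a) (g b)) : Commute a b := by
  simpa only [hf a, hg b] using h.map s

namespace CategoryTheory.CosimplicialObject

variable {C : Type*} [Category C] {FC : C → C → Type*} {CC : C → Type*}
  [∀ X Y, FunLike (FC X Y) (CC X) (CC Y)] [ConcreteCategory C FC]
  (A : CosimplicialObject C) {m : ℕ} (i : Fin (m + 1))

theorem leftInverse_σ_δ_castSucc :
    LeftInverse (ConcreteCategory.hom (A.σ i)) (ConcreteCategory.hom (A.δ i.castSucc)) :=
  fun x => by rw [← ConcreteCategory.comp_apply, δ_comp_σ_self, ConcreteCategory.id_apply]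

theorem leftInverse_σ_δ_succ :
    LeftInverse (ConcreteCategory.hom (A.σ i)) (ConcreteCategory.hom (A.δ i.succ)) :=
  fun x => by rw [← ConcreteCategory.comp_apply, δ_comp_σ_succ, ConcreteCategory.id_apply]

end CategoryTheory.CosimplicialObject

theorem cosimplicial_algebra_commutative_of_adjacent_cofaces_commute
    (k : Type*) [CommRing k] (A : SimplexCategory ⥤ AlgCat k) (n : ℕ)
    (h : ∀ (m : ℕ), m < n → ∀ (i : ℕ) (hi : i ≤ m)
      (a b : A.obj (SimplexCategory.mk m)),
        Commute
          ((A.map (SimplexCategory.δ (⟨i, by omega⟩ : Fin (m + 2)))) a)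
          ((A.map (SimplexCategory.δ (⟨i + 1, by omega⟩ : Fin (m + 2)))) b)) :
    ∀ (m : ℕ), m < n → ∀ (a b : A.obj (SimplexCategory.mk m)), Commute a b := by
  intro m hm a b
  exact (h m hm 0 m.zero_le a b).of_map_of_leftInverse (A.map (SimplexCategory.σ 0)).hom
    (CosimplicialObject.leftInverse_σ_δ_castSucc A 0)
    (CosimplicialObject.leftInverse_σ_δ_succ A 0)
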